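/- Fix μ̃ > 0, σ > 0, θ̃ ∈ ℝ, S₀ > 0 and T > 0, and define the XOU futures curve f(T) := exp( e^{−μ̃T}·ln S₀ + (1 − e^{−μ̃T})(θ̃ − σ²/(2μ̃)) + (σ²/(4μ̃))(1 − e^{−2μ̃T}) ). If θ̃ − (σ²/(2μ̃))(1 − e^{−μ̃T}) − ( e^{2μ̃T}/4 + σ²/(2μ̃) )^{1/2} − e^{μ̃T}/2 < ln S₀ < θ̃ − (σ²/(2μ̃))(1 − e^{−μ̃T}), then the first derivative of f at T is strictly positive and the second derivative of f at T is strictly negative (the futures curve is upward-sloping and concave at T). -/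

import Mathlib

/-!
Write `f = exp ∘ G`, so `f' = f G'` and `f'' = f (G'² + G'')`. With
`w(T) = θ̃ - (σ²/(2μ̃))(1 - e^{-μ̃T}) - ln S₀` one finds `G'(T) = μ̃ e^{-μ̃T} w(T)`, so `f'(T) > 0`
is the upper bound `w(T) > 0` on `ln S₀`, and
`G'² + G'' = μ̃² e^{-2μ̃T} (w² - e^{μ̃T} w - σ²/(2μ̃))`. This quadratic in `w` is negative between
its roots `e^{μ̃T}/2 ± √(e^{2μ̃T}/4 + σ²/(2μ̃))`; the lower bound on `ln S₀` puts `w` below the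
larger root and `w > 0` keeps it above the smaller one.
-/

open Real

noncomputable def xouLogFutures (μ θ σ L t : ℝ) : ℝ :=
  exp (-μ * t) * L + (1 - exp (-μ * t)) * (θ - σ ^ 2 / (2 * μ))
    + σ ^ 2 / (4 * μ) * (1 - exp (-2 * μ * t))

noncomputable def xouSlopeGap (μ θ σ L t : ℝ) : ℝ :=
  θ - σ ^ 2 / (2 * μ) * (1 - exp (-μ * t)) - L

theorem abs_sub_half_lt_sqrt_iff (b c w : ℝ) :
    |w - b / 2| < √(b ^ 2 / 4 + c) ↔ w ^ 2 < b * w + c := by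
  rw [Real.lt_sqrt (abs_nonneg _), sq_abs]
  constructor <;> intro h <;> nlinarith

theorem sq_lt_mul_add_of_pos_of_lt_sqrt_add {b c w : ℝ} (hc : 0 ≤ c) (hw : 0 < w)
    (h : w < √(b ^ 2 / 4 + c) + b / 2) : w ^ 2 < b * w + c := by
  have hb : b / 2 ≤ √(b ^ 2 / 4 + c) :=
    (le_abs_self _).trans (Real.abs_le_sqrt (by linarith))
  rw [← abs_sub_half_lt_sqrt_iff, abs_lt]
  constructor <;> linarith

theorem deriv_exp_comp {G G' : ℝ → ℝ} (hG : ∀ x, HasDerivAt G (G' x) x) :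
    deriv (fun x => exp (G x)) = fun x => exp (G x) * G' x :=
  funext fun x => (hG x).exp.deriv

theorem deriv_deriv_exp_comp {G G' G'' : ℝ → ℝ} (hG : ∀ x, HasDerivAt G (G' x) x)
    (hG' : ∀ x, HasDerivAt G' (G'' x) x) (t : ℝ) :
    deriv (deriv fun x => exp (G x)) t = exp (G t) * (G' t ^ 2 + G'' t) := by
  rw [deriv_exp_comp hG]
  exact ((hG t).exp.mul (hG' t)).deriv.trans (by ring)

theorem hasDerivAt_exp_neg_mul (μ t : ℝ) :
    HasDerivAt (fun x => exp (-μ * x)) (-μ * exp (-μ * t)) t := by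
  simpa [mul_comm] using ((hasDerivAt_id t).const_mul (-μ)).exp

section XOU

variable (μ θ σ L : ℝ)

theorem hasDerivAt_xouSlopeGap (t : ℝ) :
    HasDerivAt (xouSlopeGap μ θ σ L) (-(σ ^ 2 / (2 * μ)) * (μ * exp (-μ * t))) t :=
  ((((hasDerivAt_const t 1).sub (hasDerivAt_exp_neg_mul μ t)).const_mul
    (σ ^ 2 / (2 * μ))).const_sub θ |>.sub_const L).congr_deriv (by ring)

theorem hasDerivAt_xouLogFutures (t : ℝ) :
    HasDerivAt (xouLogFutures μ θ σ L) (μ * exp (-μ * t) * xouSlopeGap μ θ σ L t) t := by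
  have h2 : HasDerivAt (fun x => exp (-2 * μ * x)) (-(2 * μ) * exp (-(2 * μ) * t)) t := by
    simpa [neg_mul] using hasDerivAt_exp_neg_mul (2 * μ) t
  have h := (((hasDerivAt_exp_neg_mul μ t).mul_const L).add
    (((hasDerivAt_const t 1).sub (hasDerivAt_exp_neg_mul μ t)).mul_const
      (θ - σ ^ 2 / (2 * μ)))).add (((hasDerivAt_const t 1).sub h2).const_mul (σ ^ 2 / (4 * μ)))
  refine h.congr_deriv ?_
  have hexp : exp (-(2 * μ) * t) = exp (-μ * t) ^ 2 := by
    rw [← Real.exp_nat_mul]; ring_nf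
  -- `2μ · σ²/(4μ) = μ · σ²/(2μ)` also holds at `μ = 0`, where division by zero makes both sides `0`
  rcases eq_or_ne μ 0 with rfl | hμ
  · simp
  · unfold xouSlopeGap
    rw [hexp]
    field_simp
    ring

theorem hasDerivAt_xouLogFutures_slope (t : ℝ) :
    HasDerivAt (fun x => μ * exp (-μ * x) * xouSlopeGap μ θ σ L x)
      (μ * (-μ * exp (-μ * t)) * xouSlopeGap μ θ σ L t
        + μ * exp (-μ * t) * (-(σ ^ 2 / (2 * μ)) * (μ * exp (-μ * t)))) t :=
  ((hasDerivAt_exp_neg_mul μ t).const_mul μ).mul (hasDerivAt_xouSlopeGap μ θ σ L t)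

theorem xouLogFutures_slope_sq_add_deriv (t : ℝ) :
    (μ * exp (-μ * t) * xouSlopeGap μ θ σ L t) ^ 2
        + (μ * (-μ * exp (-μ * t)) * xouSlopeGap μ θ σ L t
          + μ * exp (-μ * t) * (-(σ ^ 2 / (2 * μ)) * (μ * exp (-μ * t))))
      = (μ * exp (-μ * t)) ^ 2 * (xouSlopeGap μ θ σ L t ^ 2
          - (exp (μ * t) * xouSlopeGap μ θ σ L t + σ ^ 2 / (2 * μ))) := by
  have h : exp (-μ * t) * exp (μ * t) = 1 := by rw [← exp_add]; simp
  linear_combination (μ ^ 2 * exp (-μ * t) * xouSlopeGap μ θ σ L t) * h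

end XOU

theorem xou_term_structure_up_concave_general (μt θt σ S0 T : ℝ) (hμ : 0 < μt)
    (f : ℝ → ℝ)
    (hf : f = fun T : ℝ => exp (exp (-μt * T) * log S0
      + (1 - exp (-μt * T)) * (θt - σ ^ 2 / (2 * μt))
      + σ ^ 2 / (4 * μt) * (1 - exp (-2 * μt * T))))
    (hln1 : θt - σ ^ 2 / (2 * μt) * (1 - exp (-μt * T)) - Real.sqrt (exp (2 * μt * T) / 4 + σ ^ 2 / (2 * μt)) - exp (μt * T) / 2 < log S0) (hln2 : log S0 < θt - σ ^ 2 / (2 * μt) * (1 - exp (-μt * T))) :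
    0 < deriv f T ∧ deriv (deriv f) T < 0 := by
  obtain rfl : f = fun x => exp (xouLogFutures μt θt σ (log S0) x) := hf
  have hgap : 0 < xouSlopeGap μt θt σ (log S0) T := sub_pos.2 hln2
  have hquad : xouSlopeGap μt θt σ (log S0) T ^ 2
      < exp (μt * T) * xouSlopeGap μt θt σ (log S0) T + σ ^ 2 / (2 * μt) := by
    refine sq_lt_mul_add_of_pos_of_lt_sqrt_add (by positivity) hgap ?_
    rw [show exp (2 * μt * T) = exp (μt * T) ^ 2 by rw [← exp_nat_mul]; ring_nf] at hln1
    unfold xouSlopeGap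
    linarith
  constructor
  · rw [deriv_exp_comp (hasDerivAt_xouLogFutures μt θt σ (log S0))]
    positivity
  · rw [deriv_deriv_exp_comp (hasDerivAt_xouLogFutures μt θt σ (log S0))
      (hasDerivAt_xouLogFutures_slope μt θt σ (log S0)), xouLogFutures_slope_sq_add_deriv]
    exact mul_neg_of_pos_of_neg (exp_pos _) (mul_neg_of_pos_of_neg (by positivity) (by linarith))

/-- XOU futures term structure: upward-sloping and concave in the middle-lower band. -/
theorem xou_term_structure_up_concave (μt θt σ S0 T : ℝ) (hμ : 0 < μt) (hσ : 0 < σ) (hS : 0 < S0)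
    (hT : 0 < T) (f : ℝ → ℝ)
    (hf : f = fun T : ℝ => exp (exp (-μt * T) * log S0
      + (1 - exp (-μt * T)) * (θt - σ ^ 2 / (2 * μt))
      + σ ^ 2 / (4 * μt) * (1 - exp (-2 * μt * T))))
    (hln1 : θt - σ ^ 2 / (2 * μt) * (1 - exp (-μt * T)) - Real.sqrt (exp (2 * μt * T) / 4 + σ ^ 2 / (2 * μt)) - exp (μt * T) / 2 < log S0) (hln2 : log S0 < θt - σ ^ 2 / (2 * μt) * (1 - exp (-μt * T))) :
    0 < deriv f T ∧ deriv (deriv f) T < 0 :=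
  xou_term_structure_up_concave_general μt θt σ S0 T hμ f hf hln1 hln2
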